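/- arXiv:2205.04573 — 2 statements merged into one kernel-verified Lean document; each statement's English description precedes it below -/
import Mathlib

section
/- Let Ω be a compact metrizable space, let 𝒫 ⊆ Δ(Ω) be a nonempty compact convex set of Borel probability measures, and let 𝒫' ⊆ 𝒫 be a nonempty closed convex subset. Then 𝒫' is a strict subset of 𝒫 if and only if there exist an act f : Ω → [0,1] and a constant x ∈ [0,1] such that inf_{P ∈ 𝒫'} ∫ f dP > x ≥ inf_{P ∈ 𝒫} ∫ f dP. (This is the strictness part of Theorem 1: the data-driven decision strictly improves on the data-free decision in some basic decision problem if and only if the updated set refines the initial set.) -/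
open MeasureTheory Set
open scoped NNReal BoundedContinuousFunction

/-! A measure outside the compact convex set `Q` is separated from `Q` by a single bounded
continuous function: by compactness finitely many functions `gᵢ` already tell every element
of `Q` apart from it, and in the finite-dimensional space of the integral vectors
`ν ↦ (∫ gᵢ dν)ᵢ` the image of `Q` is compact and convex, so Hahn–Banach applies there. An
affine rescaling turns the separating function into an act with values in `[0, 1]`, whose MEU
value under `Q` then exceeds its expected value under the outside measure. -/

/-- The maxmin expected-utility (MEU) value of an act `f` under a set `Q` of
probability measures: `inf_{P ∈ Q} ∫ f dP`. -/
noncomputable def MEU {Ω : Type*} [MeasurableSpace Ω]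
    (Q : Set (ProbabilityMeasure Ω)) (f : Ω → ℝ) : ℝ :=
  sInf ((fun P : ProbabilityMeasure Ω => ∫ ω, f ω ∂(P : Measure Ω)) '' Q)

lemma BoundedContinuousFunction.exists_pos_affine_mem_Icc {Ω : Type*} [TopologicalSpace Ω]
    (g : Ω →ᵇ ℝ) :
    ∃ a > (0 : ℝ), ∃ b : ℝ, ∀ ω, a * g ω + b ∈ Icc (0 : ℝ) 1 := by
  have hden : 0 < 2 * ‖g‖ + 1 := by positivity
  refine ⟨(2 * ‖g‖ + 1)⁻¹, inv_pos.2 hden, ‖g‖ / (2 * ‖g‖ + 1), fun ω => ?_⟩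
  obtain ⟨hlo, hhi⟩ := abs_le.1 (g.norm_coe_le_norm ω)
  rw [inv_mul_eq_div, ← add_div, mem_Icc, div_le_one hden]
  exact ⟨div_nonneg (by linarith) hden.le, by linarith⟩

section

variable {Ω : Type*} [MeasurableSpace Ω]

section MEU

variable {Q : Set (ProbabilityMeasure Ω)} {f : Ω → ℝ}

lemma MEU_le_integral (hf : ∀ ω, 0 ≤ f ω) {ν : ProbabilityMeasure Ω} (hν : ν ∈ Q) :
    MEU Q f ≤ ∫ ω, f ω ∂(ν : Measure Ω) :=
  csInf_le ⟨0, forall_mem_image.2 fun _ _ => integral_nonneg hf⟩ ⟨ν, hν, rfl⟩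

lemma le_MEU (hQ : Q.Nonempty) {u : ℝ} (h : ∀ ν ∈ Q, u ≤ ∫ ω, f ω ∂(ν : Measure Ω)) :
    u ≤ MEU Q f :=
  le_csInf (hQ.image _) (forall_mem_image.2 h)

end MEU

lemma integral_mem_Icc_zero_one {f : Ω → ℝ} (hf : ∀ ω, f ω ∈ Icc (0 : ℝ) 1)
    (ν : ProbabilityMeasure Ω) : ∫ ω, f ω ∂(ν : Measure Ω) ∈ Icc (0 : ℝ) 1 := by
  refine ⟨integral_nonneg fun ω => (hf ω).1, ?_⟩
  calc ∫ ω, f ω ∂(ν : Measure Ω)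
      ≤ ∫ _, (1 : ℝ) ∂(ν : Measure Ω) :=
        integral_mono_of_nonneg (.of_forall fun ω => (hf ω).1) (integrable_const 1)
          (.of_forall fun ω => (hf ω).2)
    _ = 1 := by simp

section Separation

variable [TopologicalSpace Ω]

section OpensMeasurable

variable [OpensMeasurableSpace Ω]

lemma integral_mixture {μ₁ μ₂ : Measure Ω} [IsFiniteMeasure μ₁] [IsFiniteMeasure μ₂]
    (g : Ω →ᵇ ℝ) (a b : ℝ≥0) :
    ∫ ω, g ω ∂(a • μ₁ + b • μ₂) = a * ∫ ω, g ω ∂μ₁ + b * ∫ ω, g ω ∂μ₂ := by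
  rw [integral_add_measure (g.integrable _) (g.integrable _), integral_smul_nnreal_measure,
    integral_smul_nnreal_measure, NNReal.smul_def, NNReal.smul_def, smul_eq_mul, smul_eq_mul]

lemma exists_integral_eq_apply_integrals {ι : Type*} [Fintype ι] (G : ι → Ω →ᵇ ℝ)
    (L : (ι → ℝ) →L[ℝ] ℝ) :
    ∃ g : Ω →ᵇ ℝ, ∀ (μ : Measure Ω) [IsFiniteMeasure μ],
      ∫ ω, g ω ∂μ = L (fun i => ∫ ω, G i ω ∂μ) := by
  classical
  refine ⟨∑ i, L (fun j => if i = j then 1 else 0) • G i, fun μ _ => ?_⟩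
  rw [show L _ = _ from L.toLinearMap.pi_apply_eq_sum_univ _]
  simp only [BoundedContinuousFunction.coe_sum, BoundedContinuousFunction.coe_smul,
    Finset.sum_apply, smul_eq_mul]
  rw [integral_finsetSum _ fun i _ => ((G i).integrable μ).const_mul _]
  refine Finset.sum_congr rfl fun i _ => ?_
  rw [integral_const_mul, mul_comm]
  rfl

lemma convex_image_integrals {ι : Type*} (G : ι → Ω →ᵇ ℝ) {K : Set (ProbabilityMeasure Ω)}
    (hK : Convex ℝ≥0 (ProbabilityMeasure.toMeasure '' K)) :
    Convex ℝ ((fun ν : ProbabilityMeasure Ω => fun i => ∫ ω, G i ω ∂(ν : Measure Ω)) '' K) := by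
  rintro _ ⟨ν₁, hν₁, rfl⟩ _ ⟨ν₂, hν₂, rfl⟩ a b ha hb hab
  obtain ⟨σ, hσ, hσeq⟩ := hK ⟨ν₁, hν₁, rfl⟩ ⟨ν₂, hν₂, rfl⟩ (zero_le (a := a.toNNReal))
    (zero_le (a := b.toNNReal)) (by rw [← Real.toNNReal_add ha hb, hab, Real.toNNReal_one])
  refine ⟨σ, hσ, funext fun i => ?_⟩
  simp only [hσeq, integral_mixture, Real.coe_toNNReal _ ha, Real.coe_toNNReal _ hb,
    Pi.add_apply, Pi.smul_apply, smul_eq_mul]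

end OpensMeasurable

variable [HasOuterApproxClosed Ω] [BorelSpace Ω]

lemma ProbabilityMeasure.exists_finset_integral_ne_of_notMem {K : Set (ProbabilityMeasure Ω)}
    (hK : IsCompact K) {μ : ProbabilityMeasure Ω} (hμ : μ ∉ K) :
    ∃ t : Finset (Ω →ᵇ ℝ), ∀ ν ∈ K, ∃ g ∈ t,
      ∫ ω, g ω ∂(ν : Measure Ω) ≠ ∫ ω, g ω ∂(μ : Measure Ω) := by
  have hcover : K ⊆ ⋃ g : Ω →ᵇ ℝ,
      {ν | ∫ ω, g ω ∂(ν : Measure Ω) ≠ ∫ ω, g ω ∂(μ : Measure Ω)} := by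
    intro ν hν
    by_contra h
    simp only [mem_iUnion, mem_ofPred_eq, not_exists, not_not] at h
    exact hμ (ProbabilityMeasure.toMeasure_injective
      (ext_of_forall_integral_eq_of_IsFiniteMeasure h) ▸ hν)
  obtain ⟨t, ht⟩ := hK.elim_finite_subcover _
    (fun g => isOpen_ne_fun (ProbabilityMeasure.continuous_integral_boundedContinuousFunction g)
      continuous_const) hcover
  exact ⟨t, fun ν hν => by simpa using ht hν⟩

theorem ProbabilityMeasure.exists_boundedContinuous_separating_of_notMem
    {K : Set (ProbabilityMeasure Ω)} (hKc : IsCompact K)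
    (hKconv : Convex ℝ≥0 (ProbabilityMeasure.toMeasure '' K))
    {μ : ProbabilityMeasure Ω} (hμ : μ ∉ K) :
    ∃ g : Ω →ᵇ ℝ, ∃ u : ℝ, ∫ ω, g ω ∂(μ : Measure Ω) < u ∧
      ∀ ν ∈ K, u < ∫ ω, g ω ∂(ν : Measure Ω) := by
  obtain ⟨t, ht⟩ := exists_finset_integral_ne_of_notMem hKc hμ
  set Φ : ProbabilityMeasure Ω → t → ℝ := fun ν g => ∫ ω, (g : Ω →ᵇ ℝ) ω ∂(ν : Measure Ω)
  have hΦK : IsCompact (Φ '' K) := hKc.image <|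
    continuous_pi fun g => ProbabilityMeasure.continuous_integral_boundedContinuousFunction _
  have hμK : Φ μ ∉ Φ '' K := by
    rintro ⟨ν, hν, hΦν⟩
    obtain ⟨g, hg, hne⟩ := ht ν hν
    exact hne (congrFun hΦν ⟨g, hg⟩)
  obtain ⟨L, u, hLμ, hLK⟩ := geometric_hahn_banach_point_closed
    (convex_image_integrals (fun g : t => (g : Ω →ᵇ ℝ)) hKconv) hΦK.isClosed hμK
  obtain ⟨g, hg⟩ := exists_integral_eq_apply_integrals (fun g : t => (g : Ω →ᵇ ℝ)) L
  exact ⟨g, u, (hg μ).symm ▸ hLμ, fun ν hν => (hg ν).symm ▸ hLK _ ⟨ν, hν, rfl⟩⟩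

theorem ProbabilityMeasure.exists_act_separating_of_notMem
    {K : Set (ProbabilityMeasure Ω)} (hKc : IsCompact K)
    (hKconv : Convex ℝ≥0 (ProbabilityMeasure.toMeasure '' K))
    {μ : ProbabilityMeasure Ω} (hμ : μ ∉ K) :
    ∃ f : Ω → ℝ, Measurable f ∧ (∀ ω, f ω ∈ Icc (0 : ℝ) 1) ∧ ∃ u : ℝ,
      ∫ ω, f ω ∂(μ : Measure Ω) < u ∧ ∀ ν ∈ K, u < ∫ ω, f ω ∂(ν : Measure Ω) := by
  obtain ⟨g, u, hgμ, hgK⟩ := exists_boundedContinuous_separating_of_notMem hKc hKconv hμ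
  obtain ⟨a, ha, b, hab⟩ := g.exists_pos_affine_mem_Icc
  have hint (ν : ProbabilityMeasure Ω) :
      ∫ ω, a * g ω + b ∂(ν : Measure Ω) = a * ∫ ω, g ω ∂(ν : Measure Ω) + b := by
    rw [integral_add ((g.integrable _).const_mul a) (integrable_const b), integral_const_mul]
    simp
  refine ⟨fun ω => a * g ω + b, (g.continuous.measurable.const_mul a).add_const b, hab,
    a * u + b, ?_, fun ν hν => ?_⟩
  · rw [hint]; gcongr
  · rw [hint]; gcongr; exact hgK ν hν

end Separation

end

theorem strict_refine_iff_strict_basic_improvement_general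
    {Ω : Type*} [MeasurableSpace Ω] [TopologicalSpace Ω] [BorelSpace Ω]
    [TopologicalSpace.MetrizableSpace Ω]
    (P Q : Set (ProbabilityMeasure Ω))
    (hPcpt : IsCompact P)
    (hQne : Q.Nonempty) (hQsub : Q ⊆ P) (hQcl : IsClosed Q)
    (hQconv : Convex ℝ≥0 (ProbabilityMeasure.toMeasure '' Q)) :
    Q ⊂ P ↔
      ∃ f : Ω → ℝ, Measurable f ∧ (∀ ω, f ω ∈ Icc (0 : ℝ) 1) ∧
        ∃ x ∈ Icc (0 : ℝ) 1, MEU Q f > x ∧ x ≥ MEU P f := by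
  constructor
  · intro hQP
    obtain ⟨P₀, hP₀P, hP₀Q⟩ := exists_of_ssubset hQP
    obtain ⟨f, hf, hf01, u, hP₀u, huQ⟩ := ProbabilityMeasure.exists_act_separating_of_notMem
      (hPcpt.of_isClosed_subset hQcl hQsub) hQconv hP₀Q
    refine ⟨f, hf, hf01, ∫ ω, f ω ∂(P₀ : Measure Ω), integral_mem_Icc_zero_one hf01 P₀, ?_,
      MEU_le_integral (fun ω => (hf01 ω).1) hP₀P⟩
    exact hP₀u.trans_le (le_MEU hQne fun ν hν => (huQ ν hν).le)
  · rintro ⟨f, -, -, x, -, hQx, hxP⟩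
    refine hQsub.ssubset_of_ne ?_
    rintro rfl
    exact (hxP.trans_lt hQx).false

/-- **Theorem 1 (strictness part).** The updated set `Q` strictly refines the
initial set `P` iff some basic decision problem `{f, x}` yields a strict
improvement: `inf_{P ∈ Q} ∫ f dP > x ≥ inf_{P ∈ P} ∫ f dP`. -/
theorem strict_refine_iff_strict_basic_improvement
    {Ω : Type*} [MeasurableSpace Ω] [TopologicalSpace Ω] [BorelSpace Ω]
    [CompactSpace Ω] [TopologicalSpace.MetrizableSpace Ω]
    (P Q : Set (ProbabilityMeasure Ω))
    (hPne : P.Nonempty) (hPcpt : IsCompact P)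
    (hPconv : Convex ℝ≥0 (ProbabilityMeasure.toMeasure '' P))
    (hQne : Q.Nonempty) (hQsub : Q ⊆ P) (hQcl : IsClosed Q)
    (hQconv : Convex ℝ≥0 (ProbabilityMeasure.toMeasure '' Q)) :
    Q ⊂ P ↔
      ∃ f : Ω → ℝ, Measurable f ∧ (∀ ω, f ω ∈ Icc (0 : ℝ) 1) ∧
        ∃ x ∈ Icc (0 : ℝ) 1, MEU Q f > x ∧ x ≥ MEU P f :=
  strict_refine_iff_strict_basic_improvement_general P Q hPcpt hQne hQsub hQcl hQconv
end

section
/- Let S = {s_1, …, s_d} with d ≥ 2, let μ_1, …, μ_N be full-support probability measures on S, and let P = ⊗_{i=1}^N μ_i be the product measure on S^N. For ω ∈ S^N let Φ(ω) ∈ ℝ^{d−1} be the vector of empirical frequencies of s_1, …, s_{d−1}; let μ̄ ∈ ℝ^{d−1} be the vector with entries N⁻¹ Σ_{i=1}^N μ_i({s_k}) for k = 1, …, d−1; let Σ̄ = N⁻¹ Σ_{i=1}^N Σ(p_i) (where p_i ∈ ℝ^{d−1} is the marginal vector of μ_i and Σ(p) = diag(p) − p pᵀ), and let Σ̂ = Σ(μ̄).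 Then for every c ≥ 0, P({ ω : N·(Φ(ω) − μ̄)ᵀ Σ̄⁻¹ (Φ(ω) − μ̄) ≤ c }) ≤ P({ ω : N·(Φ(ω) − μ̄)ᵀ Σ̂⁻¹ (Φ(ω) − μ̄) ≤ c }). That is, under any independent but non-identical DGP, the acceptance region built from the i.i.d. distribution with the same average marginal receives at least as much probability as the acceptance region built from the DGP's own average covariance matrix. -/
open MeasureTheory Matrix

/-- The multinomial covariance matrix `Σ(p) = diag(p) − p pᵀ` associated with a
marginal probability vector `p` over the first `d − 1` of `d` outcomes. -/
noncomputable def multinomialCov {ι : Type*} [Fintype ι] [DecidableEq ι]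
    (p : ι → ℝ) : Matrix ι ι ℝ :=
  Matrix.diagonal p - Matrix.vecMulVec p p

/-- The vector in `ℝ^{d−1}` of empirical frequencies of the first `d − 1`
outcomes in a sample `ω ∈ S^N`, where `S = Fin d`. -/
noncomputable def empFreq (d N : ℕ) (ω : Fin N → Fin d) : Fin (d - 1) → ℝ :=
  fun k => (N : ℝ)⁻¹ *
    ∑ i, (if ω i = Fin.castLE (Nat.sub_le d 1) k then (1 : ℝ) else 0)

/-- The vector in `ℝ^{d−1}` of probabilities of the first `d − 1` outcomes
under a measure on `Fin d`. -/
noncomputable def margVec (d : ℕ) (μ : Measure (Fin d)) : Fin (d - 1) → ℝ :=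
  fun k => (μ {Fin.castLE (Nat.sub_le d 1) k}).toReal

/-! The acceptance region of `Σ̄` is in fact contained in that of `Σ̂`. The map
`p ↦ Σ(p)` is concave in the Loewner order, because its quadratic form
`x ↦ p ⬝ (x * x) - (p ⬝ x)²` is linear minus convex in `p`; hence `Σ̄ ⪯ Σ̂`. Each `Σ(pᵢ)`, and so
`Σ̄`, is positive definite by Cauchy–Schwarz, since full support gives `∑ₖ pᵢ k < 1`. Finally
`A ⪯ B` with `A ≻ 0` gives `xᵀ B⁻¹ x ≤ xᵀ A⁻¹ x`, as `xᵀ A⁻¹ x = max_y (2 yᵀ x - yᵀ A y)`. -/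

namespace Matrix

variable {n : Type*} [Fintype n] [DecidableEq n]

lemma mulVec_nonsing_inv_mulVec {α : Type*} [CommRing α] {A : Matrix n n α} (hA : IsUnit A.det)
    (x : n → α) : A *ᵥ (A⁻¹ *ᵥ x) = x := by
  rw [mulVec_mulVec, mul_nonsing_inv _ hA, one_mulVec]

lemma PosDef.two_mul_dotProduct_sub_le_dotProduct_inv_mulVec {A : Matrix n n ℝ} (hA : A.PosDef)
    (x y : n → ℝ) : 2 * (y ⬝ᵥ x) - y ⬝ᵥ A *ᵥ y ≤ x ⬝ᵥ A⁻¹ *ᵥ x := by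
  set w := A⁻¹ *ᵥ x
  have hAw : A *ᵥ w = x := mulVec_nonsing_inv_mulVec ((isUnit_iff_isUnit_det A).mp hA.isUnit) x
  have hsymm : w ⬝ᵥ A *ᵥ y = y ⬝ᵥ x := by
    rw [dotProduct_mulVec, ← mulVec_transpose, ← conjTranspose_eq_transpose_of_trivial,
      hA.isHermitian.eq, dotProduct_comm, hAw]
  have hnonneg := hA.posSemidef.dotProduct_mulVec_nonneg (y - w)
  simp only [star_trivial, mulVec_sub, dotProduct_sub, sub_dotProduct, hAw, hsymm] at hnonneg
  rw [dotProduct_comm x w]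
  linarith

lemma PosDef.dotProduct_inv_mulVec_le_of_posSemidef_sub {A B : Matrix n n ℝ} (hA : A.PosDef)
    (hAB : (B - A).PosSemidef) (x : n → ℝ) : x ⬝ᵥ B⁻¹ *ᵥ x ≤ x ⬝ᵥ A⁻¹ *ᵥ x := by
  have hB : B.PosDef := by simpa using hA.add_posSemidef hAB
  set y := B⁻¹ *ᵥ x
  have hBy : B *ᵥ y = x := mulVec_nonsing_inv_mulVec ((isUnit_iff_isUnit_det B).mp hB.isUnit) x
  have hAB_y := hAB.dotProduct_mulVec_nonneg y
  simp only [star_trivial, sub_mulVec, dotProduct_sub, hBy] at hAB_y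
  have hvariational := hA.two_mul_dotProduct_sub_le_dotProduct_inv_mulVec x y
  rw [dotProduct_comm x y]
  linarith

end Matrix

section multinomialCov

open Matrix

variable {ι : Type*} [Fintype ι] [DecidableEq ι]

lemma dotProduct_multinomialCov_mulVec (p x : ι → ℝ) :
    x ⬝ᵥ multinomialCov p *ᵥ x = p ⬝ᵥ (x * x) - (p ⬝ᵥ x) ^ 2 := by
  have hdiag : x ⬝ᵥ diagonal p *ᵥ x = p ⬝ᵥ (x * x) := by
    simp only [dotProduct, mulVec_diagonal, Pi.mul_apply]
    exact Finset.sum_congr rfl fun k _ => by ring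
  have hrank1 : x ⬝ᵥ vecMulVec p p *ᵥ x = (p ⬝ᵥ x) ^ 2 := by
    rw [vecMulVec_mulVec]
    simp [dotProduct_comm x p, sq]
  rw [multinomialCov, sub_mulVec, dotProduct_sub, hdiag, hrank1]

lemma isHermitian_multinomialCov (p : ι → ℝ) : (multinomialCov p).IsHermitian := by
  unfold multinomialCov
  simpa using (isHermitian_diagonal p).sub (posSemidef_vecMulVec_self_star p).isHermitian

lemma posDef_multinomialCov {p : ι → ℝ} (hp : ∀ k, 0 < p k) (hsum : ∑ k, p k < 1) :
    (multinomialCov p).PosDef := by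
  refine PosDef.of_dotProduct_mulVec_pos (isHermitian_multinomialCov p) fun x hx => ?_
  rw [star_trivial, dotProduct_multinomialCov_mulVec]
  have hpos : 0 < p ⬝ᵥ (x * x) := by
    obtain ⟨k, hk⟩ := Function.ne_iff.mp hx
    exact Finset.sum_pos' (fun j _ => mul_nonneg (hp j).le (mul_self_nonneg _))
      ⟨k, Finset.mem_univ k, mul_pos (hp k) (mul_self_pos.mpr hk)⟩
  have hcs : (p ⬝ᵥ x) ^ 2 ≤ (∑ k, p k) * (p ⬝ᵥ (x * x)) :=
    Finset.sum_sq_le_sum_mul_sum_of_sq_le_mul _ (fun k _ => (hp k).le)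
      (fun k _ => mul_nonneg (hp k).le (mul_self_nonneg (x k))) fun k _ =>
        le_of_eq (by simp only [Pi.mul_apply]; ring)
  nlinarith

lemma posSemidef_multinomialCov_sum_smul_sub {κ : Type*} [Fintype κ] {w : κ → ℝ}
    (hw₀ : ∀ i, 0 ≤ w i) (hw₁ : ∑ i, w i = 1) (p : κ → ι → ℝ) :
    (multinomialCov (∑ i, w i • p i) - ∑ i, w i • multinomialCov (p i)).PosSemidef := by
  have hherm : (∑ i, w i • multinomialCov (p i)).IsHermitian :=
    isSelfAdjoint_sum _ fun i _ =>
      (isHermitian_multinomialCov (p i)).smul (IsSelfAdjoint.all (w i))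
  refine PosSemidef.of_dotProduct_mulVec_nonneg
    ((isHermitian_multinomialCov _).sub hherm) fun x => ?_
  have hjensen : (∑ i, w i * (p i ⬝ᵥ x)) ^ 2 ≤ ∑ i, w i * (p i ⬝ᵥ x) ^ 2 :=
    (even_two.convexOn_pow (𝕜 := ℝ)).map_sum_le (fun i _ => hw₀ i) hw₁ fun _ _ => Set.mem_univ _
  simp only [star_trivial, sub_mulVec, dotProduct_sub, sum_mulVec, dotProduct_sum, smul_mulVec,
    dotProduct_smul, dotProduct_multinomialCov_mulVec, sum_dotProduct, smul_dotProduct, smul_eq_mul,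
    mul_sub, Finset.sum_sub_distrib]
  linarith

end multinomialCov

section margVec

variable {d : ℕ} {μ : Measure (Fin d)}

lemma margVec_pos [IsFiniteMeasure μ] (hfull : ∀ s, 0 < μ {s}) (k : Fin (d - 1)) :
    0 < margVec d μ k :=
  ENNReal.toReal_pos (hfull _).ne' (measure_ne_top μ _)

lemma sum_margVec_lt_one [IsProbabilityMeasure μ] (hfull : ∀ s, 0 < μ {s}) :
    ∑ k, margVec d μ k < 1 := by
  obtain ⟨m, rfl⟩ : ∃ m, d = m + 1 :=
    Nat.exists_eq_add_one.mpr (Fin.pos_iff_nonempty.mpr (nonempty_of_isProbabilityMeasure μ))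
  set firstOutcomes := Finset.univ.map (Fin.castLEEmb (Nat.sub_le (m + 1) 1))
  have himage : ∑ k, margVec (m + 1) μ k = ∑ s ∈ firstOutcomes, μ.real {s} := by
    rw [Finset.sum_map]; rfl
  have hlast : Fin.last m ∉ firstOutcomes := by
    simp only [firstOutcomes, Finset.mem_map, Finset.mem_univ, true_and, not_exists, Fin.ext_iff,
      Fin.castLEEmb_apply, Fin.val_castLE, Fin.val_last]
    omega
  rw [himage, ← probReal_univ (μ := μ), ← Finset.coe_univ, ← sum_measureReal_singleton]
  exact Finset.sum_lt_sum_of_subset (Finset.subset_univ _) (Finset.mem_univ _) hlast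
    (ENNReal.toReal_pos (hfull _).ne' (measure_ne_top μ _)) fun _ _ _ => measureReal_nonneg

end margVec

theorem robust_iid_acceptance_region_probability_general
    (d N : ℕ) (hN : 1 ≤ N)
    (μ : Fin N → Measure (Fin d))
    (hprob : ∀ i, IsProbabilityMeasure (μ i))
    (hfull : ∀ i s, 0 < μ i {s})
    (c : ℝ) :
    Measure.pi μ
        {ω : Fin N → Fin d |
          (N : ℝ) * ((empFreq d N ω - (N : ℝ)⁻¹ • ∑ i, margVec d (μ i)) ⬝ᵥ
            (((N : ℝ)⁻¹ • ∑ i, multinomialCov (margVec d (μ i)))⁻¹ *ᵥ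
              (empFreq d N ω - (N : ℝ)⁻¹ • ∑ i, margVec d (μ i)))) ≤ c}
      ≤ Measure.pi μ
        {ω : Fin N → Fin d |
          (N : ℝ) * ((empFreq d N ω - (N : ℝ)⁻¹ • ∑ i, margVec d (μ i)) ⬝ᵥ
            ((multinomialCov ((N : ℝ)⁻¹ • ∑ i, margVec d (μ i)))⁻¹ *ᵥ
              (empFreq d N ω - (N : ℝ)⁻¹ • ∑ i, margVec d (μ i)))) ≤ c} := by
  have hcov : ∀ i, (multinomialCov (margVec d (μ i))).PosDef := fun i =>
    posDef_multinomialCov (margVec_pos (hfull i)) (sum_margVec_lt_one (hfull i))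
  have hcovAvg : ((N : ℝ)⁻¹ • ∑ i, multinomialCov (margVec d (μ i))).PosDef :=
    (posDef_sum ⟨⟨0, hN⟩, Finset.mem_univ _⟩ fun i _ => hcov i).smul (by positivity)
  have hle : (multinomialCov ((N : ℝ)⁻¹ • ∑ i, margVec d (μ i))
      - (N : ℝ)⁻¹ • ∑ i, multinomialCov (margVec d (μ i))).PosSemidef := by
    simpa only [Finset.smul_sum] using posSemidef_multinomialCov_sum_smul_sub
      (w := fun _ => (N : ℝ)⁻¹) (fun _ => by positivity)
      (by rw [Finset.sum_const, Finset.card_univ, Fintype.card_fin, nsmul_eq_mul,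
        mul_inv_cancel₀ (Nat.cast_ne_zero.mpr (by omega))]) _
  exact measure_mono fun ω hω => (mul_le_mul_of_nonneg_left
    (hcovAvg.dotProduct_inv_mulVec_le_of_posSemidef_sub hle _) (Nat.cast_nonneg N)).trans hω

/-- **Acceptance-region comparison.** Under any independent but possibly
non-identical DGP `P = ⊗ᵢ μᵢ` on `S^N` with full-support marginals, the
ellipsoidal acceptance region built from the i.i.d. covariance matrix `Σ̂`
(with the same average marginal) receives at least as much `P`-probability as
the region built from the DGP's own average covariance matrix `Σ̄`. -/
theorem robust_iid_acceptance_region_probability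
    (d N : ℕ) (hd : 2 ≤ d) (hN : 1 ≤ N)
    (μ : Fin N → Measure (Fin d))
    (hprob : ∀ i, IsProbabilityMeasure (μ i))
    (hfull : ∀ i s, 0 < μ i {s})
    (c : ℝ) (hc : 0 ≤ c) :
    Measure.pi μ
        {ω : Fin N → Fin d |
          (N : ℝ) * ((empFreq d N ω - (N : ℝ)⁻¹ • ∑ i, margVec d (μ i)) ⬝ᵥ
            (((N : ℝ)⁻¹ • ∑ i, multinomialCov (margVec d (μ i)))⁻¹ *ᵥ
              (empFreq d N ω - (N : ℝ)⁻¹ • ∑ i, margVec d (μ i)))) ≤ c}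
      ≤ Measure.pi μ
        {ω : Fin N → Fin d |
          (N : ℝ) * ((empFreq d N ω - (N : ℝ)⁻¹ • ∑ i, margVec d (μ i)) ⬝ᵥ
            ((multinomialCov ((N : ℝ)⁻¹ • ∑ i, margVec d (μ i)))⁻¹ *ᵥ
              (empFreq d N ω - (N : ℝ)⁻¹ • ∑ i, margVec d (μ i)))) ≤ c} :=
  robust_iid_acceptance_region_probability_general d N hN μ hprob hfull c
end
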